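/- For every x ∈ X, the commutator of F and the projection Π^x satisfies ‖[F, Π^x]‖ ≤ 2^{−n/2}·√(2·Γ_x). -/

import Mathlib

/-!
`F = H S H`, where `H` is the Hadamard transform on `ℂ^Y` extended by `1` on `|⊥⟩` (a symmetric
involution) and `S = 1 - e eᵀ` is the reflection in `e = |0ⁿ⟩ - |⊥⟩`. Hence `F = 1 - u u*` with
`u = H e = |φ₀⟩ - |⊥⟩`. For a projection `Π`, the vectors `v = Π u` and `w = (1 - Π) u` are
orthogonal and `[F, Π] = v w* - w v*`, whose norm is at most `‖v‖ ‖w‖` by Bessel's inequality.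
Finally `‖v‖ = 2^{-n/2} √Γ_x` and `‖w‖ ≤ ‖u‖ = √2`.
-/

open scoped Matrix Kronecker

noncomputable section

/-- The ℓ²→ℓ² operator norm of a square complex matrix. -/
def opNorm {I : Type*} [Fintype I] [DecidableEq I] (A : Matrix I I ℂ) : ℝ :=
  ‖Matrix.toEuclideanCLM (𝕜 := ℂ) A‖

/-- The commutator [A,B] = AB - BA. -/
def commM {I : Type*} [Fintype I] (A B : Matrix I I ℂ) : Matrix I I ℂ := A * B - B * A

/-- Euclidean norm of a vector in ℂ^I. -/
def vnorm {I : Type*} [Fintype I] (v : I → ℂ) : ℝ := Real.sqrt (∑ i, ‖v i‖ ^ 2)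

/-- Y = {0,1}^n. -/
abbrev Yb (n : ℕ) := Fin n → Bool
/-- Ȳ = Y ∪ {⊥}. -/
abbrev Ybar (n : ℕ) := Option (Yb n)

/-- standard basis vector |a⟩. -/
def ket {n : ℕ} (a : Ybar n) : Ybar n → ℂ := fun b => if b = a then 1 else 0

/-- (-1)^{η⋅y}. -/
def signDot {n : ℕ} (η y : Yb n) : ℂ := (-1 : ℂ) ^ (Finset.univ.filter fun i => η i && y i).card

/-- 2^{-n/2}. -/
def cst (n : ℕ) : ℝ := (2 : ℝ) ^ (-(n : ℝ) / 2)

/-- |φ_η⟩ = 2^{-n/2} ∑_y (-1)^{η⋅y} |y⟩. -/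
def phi {n : ℕ} (η : Yb n) : Ybar n → ℂ :=
  fun a => Option.casesOn a 0 fun y => (cst n : ℂ) * signDot η y

/-- |φ_0⟩. -/
def phi0 (n : ℕ) : Ybar n → ℂ := phi fun _ => false

/-- The Walsh–Hadamard transform on ℂ^Y, extended by the identity on |⊥⟩. -/
def Hbar (n : ℕ) : Matrix (Ybar n) (Ybar n) ℂ :=
  Matrix.of fun a b =>
    match a, b with
    | none, none => 1
    | some y, some y' => (cst n : ℂ) * signDot y y'
    | _, _ => 0

/-- The involution exchanging ⊥ and 0^n. -/
def swapBot (n : ℕ) : Ybar n → Ybar n :=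
  fun a =>
    Option.casesOn a (some fun _ => false) fun y =>
      if y = (fun _ => false) then none else some y

/-- The permutation matrix exchanging |⊥⟩ and |0^n⟩. -/
def Sswap (n : ℕ) : Matrix (Ybar n) (Ybar n) ℂ :=
  Matrix.of fun a b => if a = swapBot n b then 1 else 0

/-- F = H̄ ⬝ S ⬝ H̄. -/
def Fmat (n : ℕ) : Matrix (Ybar n) (Ybar n) ℂ := Hbar n * Sswap n * Hbar n

/-- Γ_x = |{y : (x,y) ∈ R}|. -/
def Gam {n : ℕ} {X : Type*} [Fintype X] (R : X → Yb n → Prop) [∀ x, DecidablePred (R x)]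
    (x : X) : ℕ :=
  (Finset.univ.filter fun y => R x y).card

/-- Γ_R = max_x Γ_x. -/
def GamR {n : ℕ} {X : Type*} [Fintype X] (R : X → Yb n → Prop) [∀ x, DecidablePred (R x)] : ℕ :=
  Finset.univ.sup fun x => Gam R x

/-- whether an entry a ∈ Ȳ satisfies the relation at x (⊥ never does). -/
def hitB {n : ℕ} {X : Type*} (R : X → Yb n → Prop) [∀ x, DecidablePred (R x)] (x : X) :
    Ybar n → Bool :=
  fun a => Option.casesOn a false fun y => decide (R x y)

/-- The projection Π^x = ∑_{y : (x,y)∈R} |y⟩⟨y| on ℂ^Ȳ. -/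
def Pix {n : ℕ} {X : Type*} (R : X → Yb n → Prop) [∀ x, DecidablePred (R x)] (x : X) :
    Matrix (Ybar n) (Ybar n) ℂ :=
  Matrix.diagonal fun a => if hitB R x a then 1 else 0

/-- bitwise xor. -/
def xorY {n : ℕ} (y y' : Yb n) : Yb n := fun i => xor (y i) (y' i)

/-- CNOT on Y × Ȳ (control Ȳ, target Y), acting trivially on |y⟩⊗|⊥⟩. -/
def cnotFun (n : ℕ) : Yb n × Ybar n → Yb n × Ybar n :=
  fun p => Option.casesOn p.2 p fun y' => (xorY p.1 y', p.2)

def CNOTmat (n : ℕ) : Matrix (Yb n × Ybar n) (Yb n × Ybar n) ℂ :=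
  Matrix.of fun a b => if a = cnotFun n b then 1 else 0

/-- O^x = (1⊗F)·CNOT·(1⊗F) on ℂ^{Y×Ȳ}. -/
def Oxsmall (n : ℕ) : Matrix (Yb n × Ybar n) (Yb n × Ybar n) ℂ :=
  ((1 : Matrix (Yb n) (Yb n) ℂ) ⊗ₖ Fmat n) * CNOTmat n *
    ((1 : Matrix (Yb n) (Yb n) ℂ) ⊗ₖ Fmat n)

/-- The database index set D̄ = X → Ȳ. -/
abbrev Db (n : ℕ) (X : Type*) := X → Ybar n

/-- An operator A on ℂ^Ȳ acting on the x-coordinate of ℂ^{D̄}. -/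
def onCoord {n : ℕ} {X : Type*} [Fintype X] [DecidableEq X] (x : X)
    (A : Matrix (Ybar n) (Ybar n) ℂ) : Matrix (Db n X) (Db n X) ℂ :=
  Matrix.of fun d d' => if ∀ x', x' ≠ x → d x' = d' x' then A (d x) (d' x) else 0

/-- Π^x_{D_x} : diagonal projection on ℂ^{D̄} onto databases with (x, d x) ∈ R. -/
def PiDx {n : ℕ} {X : Type*} [Fintype X] [DecidableEq X]
    (R : X → Yb n → Prop) [∀ x, DecidablePred (R x)] (x : X) :
    Matrix (Db n X) (Db n X) ℂ :=
  Matrix.diagonal fun d => if hitB R x (d x) then 1 else 0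

/-- Π^∅_D : diagonal projection on ℂ^{D̄} onto databases hitting R nowhere. -/
def PiEmptyD {n : ℕ} {X : Type*} [Fintype X] [DecidableEq X]
    (R : X → Yb n → Prop) [∀ x, DecidablePred (R x)] :
    Matrix (Db n X) (Db n X) ℂ :=
  Matrix.diagonal fun d => if ∀ x, hitB R x (d x) = false then 1 else 0

/-- CNOT_{YD_x}. -/
def cnotDFun {n : ℕ} {X : Type*} (x : X) : Yb n × Db n X → Yb n × Db n X :=
  fun p => Option.casesOn (p.2 x) p fun yx => (xorY p.1 yx, p.2)

def CNOTD {n : ℕ} {X : Type*} [Fintype X] [DecidableEq X] (x : X) :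
    Matrix (Yb n × Db n X) (Yb n × Db n X) ℂ :=
  Matrix.of fun a b => if a = cnotDFun x b then 1 else 0

/-- F_{D_x}. -/
def FDx (n : ℕ) {X : Type*} [Fintype X] [DecidableEq X] (x : X) :
    Matrix (Db n X) (Db n X) ℂ :=
  onCoord x (Fmat n)

/-- O^x_{YD_x} = F_{D_x}·CNOT_{YD_x}·F_{D_x} on ℂ^{Y×D̄}. -/
def OxD (n : ℕ) {X : Type*} [Fintype X] [DecidableEq X] (x : X) :
    Matrix (Yb n × Db n X) (Yb n × Db n X) ℂ :=
  ((1 : Matrix (Yb n) (Yb n) ℂ) ⊗ₖ FDx n x) * CNOTD x *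
    ((1 : Matrix (Yb n) (Yb n) ℂ) ⊗ₖ FDx n x)

/-- O_{XYD} = ∑_x |x⟩⟨x| ⊗ O^x_{YD_x} on ℂ^{X×Y×D̄}. -/
def OXYD (n : ℕ) (X : Type*) [Fintype X] [DecidableEq X] :
    Matrix (X × Yb n × Db n X) (X × Yb n × Db n X) ℂ :=
  Matrix.of fun p q =>
    if p.1 = q.1 then OxD n p.1 (p.2.1, p.2.2) (q.2.1, q.2.2) else 0

/-- The pointer set P = ZMod (|X|+1). -/
abbrev Ptr (X : Type*) [Fintype X] := ZMod (Fintype.card X + 1)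

/-- Encoding of X into the nonzero elements of ZMod (|X|+1). -/
def encodeX {X : Type*} [Fintype X] (x : X) : Ptr X :=
  (((Fintype.equivFin X x : ℕ) + 1 : ℕ) : Ptr X)

/-- ext(d): the smallest x ∈ X with (x, d x) ∈ R, encoded in ZMod (|X|+1); ∅ ↦ 0. -/
def extD {n : ℕ} {X : Type*} [Fintype X] [LinearOrder X] (R : X → Yb n → Prop)
    [∀ x, DecidablePred (R x)] (d : Db n X) : Ptr X :=
  if h : (Finset.univ.filter fun x => hitB R x (d x) = true).Nonempty then
    encodeX ((Finset.univ.filter fun x => hitB R x (d x) = true).min' h)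
  else 0

/-- The purified measurement M_{DP} : |d⟩⊗|w⟩ ↦ |d⟩⊗|w + ext(d)⟩ on ℂ^{D̄×P}. -/
def MDP {n : ℕ} {X : Type*} [Fintype X] [LinearOrder X] (R : X → Yb n → Prop)
    [∀ x, DecidablePred (R x)] :
    Matrix (Db n X × Ptr X) (Db n X × Ptr X) ℂ :=
  Matrix.of fun p q => if p = (q.1, q.2 + extD R q.1) then 1 else 0

/-- O^x_{YD_x} ⊗ 1_P on ℂ^{Y×D̄×P}. -/
def OxDP (n : ℕ) {X : Type*} [Fintype X] [DecidableEq X] (x : X) :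
    Matrix (Yb n × Db n X × Ptr X) (Yb n × Db n X × Ptr X) ℂ :=
  Matrix.of fun p q =>
    if p.2.2 = q.2.2 then OxD n x (p.1, p.2.1) (q.1, q.2.1) else 0

/-- 1_Y ⊗ M_{DP} on ℂ^{Y×D̄×P}. -/
def MYDP {n : ℕ} {X : Type*} [Fintype X] [LinearOrder X] (R : X → Yb n → Prop)
    [∀ x, DecidablePred (R x)] :
    Matrix (Yb n × Db n X × Ptr X) (Yb n × Db n X × Ptr X) ℂ :=
  Matrix.of fun p q =>
    if p.1 = q.1 then MDP R (p.2.1, p.2.2) (q.2.1, q.2.2) else 0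

/-- O_{XYD} ⊗ 1_P on ℂ^{X×Y×D̄×P}. -/
def OXYDP (n : ℕ) (X : Type*) [Fintype X] [DecidableEq X] :
    Matrix (X × Yb n × Db n X × Ptr X) (X × Yb n × Db n X × Ptr X) ℂ :=
  Matrix.of fun p q =>
    if p.2.2.2 = q.2.2.2 then
      OXYD n X (p.1, p.2.1, p.2.2.1) (q.1, q.2.1, q.2.2.1)
    else 0

/-- 1_{X×Y} ⊗ M_{DP} on ℂ^{X×Y×D̄×P}. -/
def MXYDP {n : ℕ} {X : Type*} [Fintype X] [LinearOrder X] (R : X → Yb n → Prop)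
    [∀ x, DecidablePred (R x)] :
    Matrix (X × Yb n × Db n X × Ptr X) (X × Yb n × Db n X × Ptr X) ℂ :=
  Matrix.of fun p q =>
    if p.1 = q.1 ∧ p.2.1 = q.2.1 then
      MDP R (p.2.2.1, p.2.2.2) (q.2.2.1, q.2.2.2)
    else 0








-- helper instance (Lean struggles to find this by search)
instance instDEq4 (n : ℕ) (X : Type*) [Fintype X] [DecidableEq X] :
    DecidableEq (X × Yb n × Db n X × Ptr X) :=
  instDecidableEqProd


-- extensions to the five-register space W × X × Y × D̄ × P
/-- 1_W ⊗ O_{XYD} ⊗ 1_P on ℂ^{W×X×Y×D̄×P}. -/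
def OW (n : ℕ) (W X : Type*) [Fintype X] [DecidableEq X] [DecidableEq W] :
    Matrix (W × X × Yb n × Db n X × Ptr X) (W × X × Yb n × Db n X × Ptr X) ℂ :=
  Matrix.of fun p q =>
    if p.1 = q.1 ∧ p.2.2.2.2 = q.2.2.2.2 then
      OXYD n X (p.2.1, p.2.2.1, p.2.2.2.1) (q.2.1, q.2.2.1, q.2.2.2.1)
    else 0

/-- 1_{W×X×Y} ⊗ M_{DP} on ℂ^{W×X×Y×D̄×P}. -/
def MW {n : ℕ} (W : Type*) {X : Type*} [Fintype X] [LinearOrder X] [DecidableEq W]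
    (R : X → Yb n → Prop) [∀ x, DecidablePred (R x)] :
    Matrix (W × X × Yb n × Db n X × Ptr X) (W × X × Yb n × Db n X × Ptr X) ℂ :=
  Matrix.of fun p q =>
    if p.1 = q.1 ∧ p.2.1 = q.2.1 ∧ p.2.2.1 = q.2.2.1 then
      MDP R (p.2.2.2.1, p.2.2.2.2) (q.2.2.2.1, q.2.2.2.2)
    else 0

instance instDEq5 (n : ℕ) (W X : Type*) [Fintype X] [DecidableEq X] [DecidableEq W] :
    DecidableEq (W × X × Yb n × Db n X × Ptr X) :=
  instDecidableEqProd


/-- V ⊗ 1_{D̄×P} on ℂ^{W×X×Y×D̄×P}. -/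
def Vext (n : ℕ) (W X : Type*) [Fintype X] [DecidableEq X]
    (V : Matrix (W × X × Yb n) (W × X × Yb n) ℂ) :
    Matrix (W × X × Yb n × Db n X × Ptr X) (W × X × Yb n × Db n X × Ptr X) ℂ :=
  Matrix.of fun p q =>
    if p.2.2.2 = q.2.2.2 then V (p.1, p.2.1, p.2.2.1) (q.1, q.2.1, q.2.2.1) else 0

/-- Ψ = ψ ⊗ |⊥⃗⟩ ⊗ |0⟩. -/
def PsiInit (n : ℕ) {W X : Type*} [Fintype X] [DecidableEq X]
    (ψ : W × X × Yb n → ℂ) : W × X × Yb n × Db n X × Ptr X → ℂ :=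
  fun p =>
    if p.2.2.2.1 = (fun _ => (none : Ybar n)) ∧ p.2.2.2.2 = (0 : Ptr X) then
      ψ (p.1, p.2.1, p.2.2.1)
    else 0

/-- 1_{W×X×Y×D̄} ⊗ |0⟩⟨0|_P. -/
def ProjZeroP (n : ℕ) (W X : Type*) [Fintype X] [DecidableEq X] [DecidableEq W] :
    Matrix (W × X × Yb n × Db n X × Ptr X) (W × X × Yb n × Db n X × Ptr X) ℂ :=
  Matrix.of fun p q =>
    if p.1 = q.1 ∧ p.2.1 = q.2.1 ∧ p.2.2.1 = q.2.2.1 ∧ p.2.2.2.1 = q.2.2.2.1 ∧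
        p.2.2.2.2 = (0 : Ptr X) ∧ q.2.2.2.2 = (0 : Ptr X) then 1 else 0



/-- O_{XYD} acting on registers 1, 2 and 5 of ℂ^{X×Y×X'×Y'×D̄}. -/
def Oquery1 (n : ℕ) (X : Type*) [Fintype X] [DecidableEq X] :
    Matrix (X × Yb n × X × Yb n × Db n X) (X × Yb n × X × Yb n × Db n X) ℂ :=
  Matrix.of fun p q =>
    if p.2.2.1 = q.2.2.1 ∧ p.2.2.2.1 = q.2.2.2.1 then
      OXYD n X (p.1, p.2.1, p.2.2.2.2) (q.1, q.2.1, q.2.2.2.2)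
    else 0

/-- O_{X'Y'D} acting on registers 3, 4 and 5 of ℂ^{X×Y×X'×Y'×D̄}. -/
def Oquery2 (n : ℕ) (X : Type*) [Fintype X] [DecidableEq X] :
    Matrix (X × Yb n × X × Yb n × Db n X) (X × Yb n × X × Yb n × Db n X) ℂ :=
  Matrix.of fun p q =>
    if p.1 = q.1 ∧ p.2.1 = q.2.1 then
      OXYD n X (p.2.2.1, p.2.2.2.1, p.2.2.2.2) (q.2.2.1, q.2.2.2.1, q.2.2.2.2)
    else 0


/-- M^R_{DP} acting on registers D and P of ℂ^{D̄×P×P'}. -/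
def Mext1 {n : ℕ} {X : Type*} [Fintype X] [LinearOrder X]
    (R : X → Yb n → Prop) [∀ x, DecidablePred (R x)] :
    Matrix (Db n X × Ptr X × Ptr X) (Db n X × Ptr X × Ptr X) ℂ :=
  Matrix.of fun p q =>
    if p.2.2 = q.2.2 then MDP R (p.1, p.2.1) (q.1, q.2.1) else 0

/-- M^{R'}_{DP'} acting on registers D and P' of ℂ^{D̄×P×P'}. -/
def Mext2 {n : ℕ} {X : Type*} [Fintype X] [LinearOrder X]
    (R' : X → Yb n → Prop) [∀ x, DecidablePred (R' x)] :
    Matrix (Db n X × Ptr X × Ptr X) (Db n X × Ptr X × Ptr X) ℂ :=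
  Matrix.of fun p q =>
    if p.2.1 = q.2.1 then MDP R' (p.1, p.2.2) (q.1, q.2.2) else 0


section InnerProductSpace

variable {𝕜 E : Type*} [RCLike 𝕜] [NormedAddCommGroup E] [InnerProductSpace 𝕜 E]

local notation "⟪" x ", " y "⟫" => inner 𝕜 x y

lemma norm_smul_add_smul_sq_of_inner_eq_zero {v w : E} (h : ⟪v, w⟫ = 0) (s t : 𝕜) :
    ‖s • v + t • w‖ ^ 2 = ‖s‖ ^ 2 * ‖v‖ ^ 2 + ‖t‖ ^ 2 * ‖w‖ ^ 2 := by
  have h' : ⟪s • v, t • w⟫ = 0 := by rw [inner_smul_left, inner_smul_right, h, mul_zero, mul_zero]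
  rw [sq, norm_add_sq_eq_norm_sq_add_norm_sq_of_inner_eq_zero _ _ h', norm_smul, norm_smul]
  ring

/-- Bessel's inequality for the orthogonal pair `v, w`, cleared of denominators. -/
lemma norm_sq_mul_norm_inner_sq_add_le {v w : E} (h : ⟪v, w⟫ = 0) (x : E) :
    ‖w‖ ^ 2 * ‖⟪v, x⟫‖ ^ 2 + ‖v‖ ^ 2 * ‖⟪w, x⟫‖ ^ 2 ≤ ‖v‖ ^ 2 * ‖w‖ ^ 2 * ‖x‖ ^ 2 := by
  set S := ‖w‖ ^ 2 * ‖⟪v, x⟫‖ ^ 2 + ‖v‖ ^ 2 * ‖⟪w, x⟫‖ ^ 2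
  -- Cauchy–Schwarz for `c` and `x` gives `S ^ 2 ≤ ‖v‖² ‖w‖² S ‖x‖²`.
  set c : E := ((‖w‖ ^ 2 : ℝ) * ⟪v, x⟫ : 𝕜) • v + ((‖v‖ ^ 2 : ℝ) * ⟪w, x⟫ : 𝕜) • w
  have hc : ‖c‖ ^ 2 = ‖v‖ ^ 2 * ‖w‖ ^ 2 * S := by
    rw [norm_smul_add_smul_sq_of_inner_eq_zero h, norm_mul, norm_mul, RCLike.norm_ofReal,
      RCLike.norm_ofReal, abs_of_nonneg (by positivity), abs_of_nonneg (by positivity)]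
    ring
  have hcx : RCLike.re ⟪c, x⟫ = S := by
    simp only [c, inner_add_left, inner_smul_left, map_mul, RCLike.conj_ofReal, mul_assoc,
      RCLike.conj_mul]
    norm_cast
  have hS : S ^ 2 ≤ ‖v‖ ^ 2 * ‖w‖ ^ 2 * S * ‖x‖ ^ 2 := by
    rw [← hc, ← hcx, ← mul_pow]
    exact pow_le_pow_left₀ (hcx ▸ by positivity) (re_inner_le_norm c x) 2
  rcases (show 0 ≤ S by positivity).eq_or_lt with hS0 | hS0
  · rw [← hS0]; positivity
  · nlinarith

lemma norm_inner_smul_sub_inner_smul_le {v w : E} (h : ⟪v, w⟫ = 0) (x : E) :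
    ‖⟪w, x⟫ • v - ⟪v, x⟫ • w‖ ≤ ‖v‖ * ‖w‖ * ‖x‖ := by
  refine (pow_le_pow_iff_left₀ (norm_nonneg _) (by positivity) two_ne_zero).mp ?_
  rw [sub_eq_add_neg, ← neg_smul, norm_smul_add_smul_sq_of_inner_eq_zero h, norm_neg]
  linarith [norm_sq_mul_norm_inner_sq_add_le h x]

end InnerProductSpace

section Matrix

open Matrix

variable {I : Type*} [Fintype I]

lemma vnorm_eq_norm_toLp (v : I → ℂ) : vnorm v = ‖WithLp.toLp 2 v‖ := by
  rw [EuclideanSpace.norm_eq]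
  rfl

lemma star_mulVec_dotProduct_sub_mulVec {P : Matrix I I ℂ} (hP : IsStarProjection P)
    (u : I → ℂ) : star (P *ᵥ u) ⬝ᵥ (u - P *ᵥ u) = 0 := by
  rw [star_mulVec, ← star_eq_conjTranspose, hP.isSelfAdjoint.star_eq, ← dotProduct_mulVec,
    mulVec_sub, mulVec_mulVec, hP.isIdempotentElem.eq, sub_self, dotProduct_zero]

variable [DecidableEq I]

lemma toEuclideanCLM_vecMulVec_sub_apply (v w : I → ℂ) (x : EuclideanSpace ℂ I) :
    toEuclideanCLM (𝕜 := ℂ) (vecMulVec v (star w) - vecMulVec w (star v)) x =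
      inner ℂ (WithLp.toLp 2 w) x • WithLp.toLp 2 v -
        inner ℂ (WithLp.toLp 2 v) x • WithLp.toLp 2 w := by
  ext i
  simp [vecMulVec_mulVec, EuclideanSpace.inner_eq_star_dotProduct, dotProduct_comm _ (star _),
    mul_comm]

lemma opNorm_vecMulVec_sub_le {v w : I → ℂ} (h : star v ⬝ᵥ w = 0) :
    opNorm (vecMulVec v (star w) - vecMulVec w (star v)) ≤ vnorm v * vnorm w := by
  have h' : inner ℂ (WithLp.toLp 2 v) (WithLp.toLp 2 w) = 0 := by
    rw [EuclideanSpace.inner_toLp_toLp, dotProduct_comm, h]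
  rw [opNorm, vnorm_eq_norm_toLp, vnorm_eq_norm_toLp]
  refine ContinuousLinearMap.opNorm_le_bound _ (by positivity) fun x => ?_
  rw [toEuclideanCLM_vecMulVec_sub_apply]
  exact norm_inner_smul_sub_inner_smul_le h' x

lemma commM_one_sub_vecMulVec {P : Matrix I I ℂ} (hP : IsSelfAdjoint P) (u : I → ℂ) :
    commM (1 - vecMulVec u (star u)) P =
      vecMulVec (P *ᵥ u) (star (u - P *ᵥ u)) - vecMulVec (u - P *ᵥ u) (star (P *ᵥ u)) := by
  have hu : vecMulVec u (star u) * P = vecMulVec u (star (P *ᵥ u)) := by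
    rw [vecMulVec_mul, star_mulVec, ← star_eq_conjTranspose, hP.star_eq]
  rw [commM, sub_mul, mul_sub, hu, mul_vecMulVec, one_mul, mul_one, star_sub, vecMulVec_sub,
    sub_vecMulVec]
  abel

lemma opNorm_commM_one_sub_vecMulVec_le {P : Matrix I I ℂ} (hP : IsStarProjection P)
    (u : I → ℂ) :
    opNorm (commM (1 - vecMulVec u (star u)) P) ≤ vnorm (P *ᵥ u) * vnorm (u - P *ᵥ u) := by
  rw [commM_one_sub_vecMulVec hP.isSelfAdjoint]
  exact opNorm_vecMulVec_sub_le (star_mulVec_dotProduct_sub_mulVec hP u)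

end Matrix

section Hadamard

open Matrix

variable {n : ℕ}

lemma signDot_eq_prod (η y : Yb n) :
    signDot η y = ∏ i, if η i && y i then (-1 : ℂ) else 1 := by
  rw [signDot, Finset.prod_ite, Finset.prod_const, Finset.prod_const, one_pow, mul_one]

lemma signDot_comm (η y : Yb n) : signDot η y = signDot y η := by
  simp only [signDot, Bool.and_comm]

@[simp]
lemma signDot_false_left (y : Yb n) : signDot (fun _ => false) y = 1 := by
  simp [signDot]

lemma sum_signDot_mul_signDot (η y : Yb n) :
    ∑ z, signDot η z * signDot z y = if η = y then (2 : ℂ) ^ n else 0 := by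
  simp only [signDot_eq_prod, ← Finset.prod_mul_distrib]
  rw [← Fintype.prod_sum (fun i b => (if η i && b then (-1 : ℂ) else 1) *
    (if b && y i then -1 else 1))]
  have hbit : ∀ i, ∑ b : Bool, (if η i && b then (-1 : ℂ) else 1) * (if b && y i then -1 else 1)
      = if η i = y i then 2 else 0 := fun i => by
    cases η i <;> cases y i <;> norm_num [Fintype.sum_bool]
  rw [Finset.prod_congr rfl fun i _ => hbit i]
  split_ifs with hηy
  · simp [hηy]
  · obtain ⟨i, hi⟩ := Function.ne_iff.mp hηy
    exact Finset.prod_eq_zero (Finset.mem_univ i) (if_neg hi)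

lemma cst_nonneg (n : ℕ) : 0 ≤ cst n := Real.rpow_nonneg zero_le_two _

lemma cst_sq_mul_two_pow (n : ℕ) : cst n ^ 2 * 2 ^ n = 1 := by
  rw [cst, ← Real.rpow_natCast, ← Real.rpow_mul zero_le_two, ← Real.rpow_natCast 2 n,
    ← Real.rpow_add zero_lt_two]
  norm_num

lemma Hbar_mul_Hbar : Hbar n * Hbar n = 1 := by
  have hcst : (cst n : ℂ) ^ 2 * 2 ^ n = 1 := by exact_mod_cast cst_sq_mul_two_pow n
  ext (_ | y) (_ | y')
  case some.some =>
    simp only [Hbar, mul_apply, of_apply, Fintype.sum_option, mul_zero, zero_add]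
    calc ∑ z, (cst n : ℂ) * signDot y z * ((cst n : ℂ) * signDot z y')
        = (cst n : ℂ) ^ 2 * ∑ z, signDot y z * signDot z y' := by
          rw [Finset.mul_sum]; exact Finset.sum_congr rfl fun _ _ => by ring
      _ = (1 : Matrix (Ybar n) (Ybar n) ℂ) (some y) (some y') := by
          rw [sum_signDot_mul_signDot, one_apply]
          split_ifs <;> simp_all
  all_goals simp [mul_apply, Fintype.sum_option, Hbar]

lemma Hbar_transpose : (Hbar n)ᵀ = Hbar n := by
  ext (_ | y) (_ | y') <;> simp [Hbar, signDot_comm]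

lemma Sswap_eq :
    Sswap n = 1 - vecMulVec (ket (some fun _ => false) - ket none)
      (ket (some fun _ => false) - ket none) := by
  ext (_ | y) (_ | y') <;> simp [Sswap, swapBot, ket, one_apply, vecMulVec_apply] <;>
    split_ifs <;> simp_all

lemma Hbar_mulVec_ket_sub_ket :
    Hbar n *ᵥ (ket (some fun _ => false) - ket none) = phi0 n - ket none := by
  ext (_ | y) <;> simp [Hbar, mulVec, dotProduct, Fintype.sum_option, ket, phi0, phi, signDot_comm]

lemma star_phi0_sub_ket : star (phi0 n - ket none) = phi0 n - ket none := by
  ext (_ | y) <;> simp [phi0, phi, ket]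

lemma Fmat_eq : Fmat n = 1 - vecMulVec (phi0 n - ket none) (star (phi0 n - ket none)) := by
  rw [Fmat, Sswap_eq, mul_sub, sub_mul, mul_one, Hbar_mul_Hbar, mul_vecMulVec, vecMulVec_mul,
    ← mulVec_transpose, Hbar_transpose, Hbar_mulVec_ket_sub_ket, star_phi0_sub_ket]

end Hadamard

section Projection

open Matrix

variable {n : ℕ} {X : Type*} (R : X → Yb n → Prop) [∀ x, DecidablePred (R x)] (x : X)

lemma Pix_isStarProjection : IsStarProjection (Pix R x) := by
  refine ⟨?_, ?_⟩
  · rw [IsIdempotentElem, Pix, diagonal_mul_diagonal]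
    congr 1
    ext a
    split_ifs <;> simp_all
  · simp [IsSelfAdjoint, star_eq_conjTranspose, Pix, diagonal_conjTranspose]

lemma Pix_mulVec_apply (u : Ybar n → ℂ) (a : Ybar n) :
    (Pix R x *ᵥ u) a = if hitB R x a then u a else 0 := by
  rw [Pix, mulVec_diagonal, ite_mul, one_mul, zero_mul]

lemma vnorm_sub_Pix_mulVec_le (u : Ybar n → ℂ) : vnorm (u - Pix R x *ᵥ u) ≤ vnorm u := by
  refine Real.sqrt_le_sqrt (Finset.sum_le_sum fun a _ => ?_)
  rw [Pi.sub_apply, Pix_mulVec_apply]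
  split_ifs <;> simp

lemma vnorm_Pix_mulVec_phi0_sub_ket [Fintype X] :
    vnorm (Pix R x *ᵥ (phi0 n - ket none)) = cst n * Real.sqrt (Gam R x) := by
  rw [vnorm, Fintype.sum_option]
  simp only [Pix_mulVec_apply, hitB, Pi.sub_apply, phi0, phi, ket, signDot_false_left]
  simp [apply_ite (fun z : ℂ => ‖z‖ ^ 2), Finset.sum_ite, Gam, Real.sqrt_mul',
    abs_of_nonneg (cst_nonneg n), Real.sqrt_sq (cst_nonneg n), mul_comm]

lemma vnorm_phi0_sub_ket : vnorm (phi0 n - ket none) = Real.sqrt 2 := by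
  rw [vnorm, Fintype.sum_option]
  simp [phi0, phi, ket, mul_comm _ (cst n ^ 2), cst_sq_mul_two_pow, one_add_one_eq_two]

end Projection

theorem stmt7_general (n : ℕ) {X : Type*} [Fintype X]
    (R : X → Yb n → Prop) [∀ x, DecidablePred (R x)] (x : X) :
    opNorm (commM (Fmat n) (Pix R x)) ≤
      (2 : ℝ) ^ (-(n : ℝ) / 2) * Real.sqrt (2 * (Gam R x : ℝ)) := by
  set u := phi0 n - ket none
  calc opNorm (commM (Fmat n) (Pix R x))
      ≤ vnorm (Pix R x *ᵥ u) * vnorm (u - Pix R x *ᵥ u) := by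
        rw [Fmat_eq]
        exact opNorm_commM_one_sub_vecMulVec_le (Pix_isStarProjection R x) u
    _ ≤ cst n * Real.sqrt (Gam R x) * vnorm u := by
        rw [vnorm_Pix_mulVec_phi0_sub_ket]
        exact mul_le_mul_of_nonneg_left (vnorm_sub_Pix_mulVec_le R x u)
          (mul_nonneg (cst_nonneg n) (Real.sqrt_nonneg _))
    _ = (2 : ℝ) ^ (-(n : ℝ) / 2) * Real.sqrt (2 * (Gam R x : ℝ)) := by
        rw [vnorm_phi0_sub_ket, cst, Real.sqrt_mul zero_le_two]
        ring

theorem stmt7 (n : ℕ) {X : Type*} [Fintype X] [Nonempty X]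
    (R : X → Yb n → Prop) [∀ x, DecidablePred (R x)] (x : X) :
    opNorm (commM (Fmat n) (Pix R x)) ≤
      (2 : ℝ) ^ (-(n : ℝ) / 2) * Real.sqrt (2 * (Gam R x : ℝ)) :=
  stmt7_general n R x

end
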